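/- Let φ = (1+√5)/2 and let X ⊂ S² be the 12-point vertex set of the regular icosahedron inscribed in the unit sphere, given by all cyclic permutations of the coordinates of (0, ±1, ±φ)/√(1+φ²); its maximum pairwise inner product is α = 1/√5. Then for every unit vector y ∈ S² with y ∉ X, there exists x ∈ X with ⟨x,y⟩ > 1/√5; i.e., adjoining any new point of S² to X strictly increases the maximum pairwise inner product. -/

import Mathlib

open scoped RealInnerProductSpace

/-- The golden ratio `(1 + √5)/2`. -/
noncomputable def gr : ℝ := (1 + Real.sqrt 5) / 2

/-- Vertex set of the regular icosahedron inscribed in the unit sphere: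
all cyclic permutations of the coordinates of `(0, ±1, ±φ)/√(1+φ²)`. -/
noncomputable def icosahedron : Set (EuclideanSpace ℝ (Fin 3)) :=
  {v | ∃ s t : ℝ, (s = 1 ∨ s = -1) ∧ (t = 1 ∨ t = -1) ∧
    ((v 0 = 0 ∧ v 1 = s * (Real.sqrt (1 + gr ^ 2))⁻¹ ∧
        v 2 = t * gr * (Real.sqrt (1 + gr ^ 2))⁻¹) ∨
     (v 1 = 0 ∧ v 2 = s * (Real.sqrt (1 + gr ^ 2))⁻¹ ∧
        v 0 = t * gr * (Real.sqrt (1 + gr ^ 2))⁻¹) ∨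
     (v 2 = 0 ∧ v 0 = s * (Real.sqrt (1 + gr ^ 2))⁻¹ ∧
        v 1 = t * gr * (Real.sqrt (1 + gr ^ 2))⁻¹))}


/-!
Distinct vertices have inner product `1/√5`, `-1/√5` or `-1`; the value `1/√5 = φ/(1+φ²)` is attained
by adjacent vertices. For the covering property, the icosahedron is antipodal and one vertex from each of
its six antipodal pairs gives a tight frame: `∑ ⟪x, y⟫² = 2‖y‖²`. If every vertex had `⟪x, y⟫ ≤ 1/√5`,
antipodality would give `⟪x, y⟫² ≤ 1/5` for all of them, so the sum would be at most `6/5 < 2`.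
-/

open Real

noncomputable def icoScale : ℝ := (√(1 + gr ^ 2))⁻¹

/-- The vertex `(0, s, t φ) / √(1 + φ²)` with its zero coordinate moved cyclically to position `k`. -/
noncomputable def icoVertex (s t : ℝ) : Fin 3 → EuclideanSpace ℝ (Fin 3)
  | 0 => !₂[0, s * icoScale, t * gr * icoScale]
  | 1 => !₂[t * gr * icoScale, 0, s * icoScale]
  | 2 => !₂[s * icoScale, t * gr * icoScale, 0]

lemma gr_sq : gr ^ 2 = gr + 1 := goldenRatio_sq

lemma gr_pos : 0 < gr := goldenRatio_pos

lemma icoScale_pos : 0 < icoScale := by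
  unfold icoScale; positivity

lemma icoScale_sq : icoScale ^ 2 = (1 + gr ^ 2)⁻¹ := by
  rw [icoScale, inv_pow, sq_sqrt (by positivity)]

lemma gr_mul_icoScale_sq : gr * icoScale ^ 2 = (√5)⁻¹ := by
  have h5 : √5 ^ 2 = 5 := sq_sqrt (by norm_num)
  have hgr : gr = (1 + √5) / 2 := rfl
  rw [icoScale_sq, gr_sq, hgr]
  field_simp
  linear_combination h5

lemma inv_sqrt_five_sq : (√5)⁻¹ ^ 2 = 1 / 5 := by
  rw [inv_pow, sq_sqrt (by norm_num), one_div]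

lemma sign_mul_le_one {s t : ℝ} (hs : s = 1 ∨ s = -1) (ht : t = 1 ∨ t = -1) : s * t ≤ 1 := by
  rcases hs with rfl | rfl <;> rcases ht with rfl | rfl <;> norm_num

lemma lt_inner_or_lt_inner_neg_of_sq_lt {E : Type*} [NormedAddCommGroup E] [InnerProductSpace ℝ E]
    {a : ℝ} {x y : E} (ha : 0 ≤ a) (h : a ^ 2 < ⟪x, y⟫ ^ 2) : a < ⟪x, y⟫ ∨ a < ⟪-x, y⟫ := by
  rw [inner_neg_left, ← lt_abs]
  simpa [sq_lt_sq, abs_of_nonneg ha] using h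

lemma inner_toLp_three (a b c : ℝ) (y : EuclideanSpace ℝ (Fin 3)) :
    ⟪!₂[a, b, c], y⟫ = a * y 0 + b * y 1 + c * y 2 := by
  simp only [PiLp.inner_apply, RCLike.inner_apply, ringHom_apply, Fin.sum_univ_three,
    Matrix.cons_val_zero, Matrix.cons_val_one, Matrix.cons_val]
  ring

lemma inner_toLp_three_toLp_three (a b c d e f : ℝ) :
    ⟪!₂[a, b, c], !₂[d, e, f]⟫ = a * d + b * e + c * f := by
  rw [inner_toLp_three]
  rfl

lemma mem_icosahedron_iff {v : EuclideanSpace ℝ (Fin 3)} :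
    v ∈ icosahedron ↔
      ∃ s t : ℝ, (s = 1 ∨ s = -1) ∧ (t = 1 ∨ t = -1) ∧ ∃ k, v = icoVertex s t k := by
  have hv : v = !₂[v 0, v 1, v 2] := by ext i; fin_cases i <;> rfl
  constructor
  · rintro ⟨s, t, hs, ht, ⟨h0, h1, h2⟩ | ⟨h1, h2, h0⟩ | ⟨h2, h0, h1⟩⟩
    · exact ⟨s, t, hs, ht, 0, by rw [hv, h0, h1, h2]; rfl⟩
    · exact ⟨s, t, hs, ht, 1, by rw [hv, h0, h1, h2]; rfl⟩
    · exact ⟨s, t, hs, ht, 2, by rw [hv, h0, h1, h2]; rfl⟩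
  · rintro ⟨s, t, hs, ht, k, rfl⟩
    refine ⟨s, t, hs, ht, ?_⟩
    fin_cases k
    exacts [Or.inl ⟨rfl, rfl, rfl⟩, Or.inr (Or.inl ⟨rfl, rfl, rfl⟩), Or.inr (Or.inr ⟨rfl, rfl, rfl⟩)]

lemma icoVertex_mem {s t : ℝ} (hs : s = 1 ∨ s = -1) (ht : t = 1 ∨ t = -1) (k : Fin 3) :
    icoVertex s t k ∈ icosahedron :=
  mem_icosahedron_iff.2 ⟨s, t, hs, ht, k, rfl⟩

lemma neg_icoVertex (s t : ℝ) (k : Fin 3) : -icoVertex s t k = icoVertex (-s) (-t) k := by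
  ext i; fin_cases k <;> fin_cases i <;> simp [icoVertex]

lemma inner_icoVertex_same_slot (s t s' t' : ℝ) (k : Fin 3) :
    ⟪icoVertex s t k, icoVertex s' t' k⟫ = (s * s' + t * t' * gr ^ 2) * icoScale ^ 2 := by
  fin_cases k <;> simp only [icoVertex, inner_toLp_three_toLp_three] <;> ring

lemma inner_icoVertex_same_slot_le {s t s' t' : ℝ} (hs : s = 1 ∨ s = -1) (ht : t = 1 ∨ t = -1)
    (hs' : s' = 1 ∨ s' = -1) (ht' : t' = 1 ∨ t' = -1) (hne : ¬(s = s' ∧ t = t')) (k : Fin 3) :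
    ⟪icoVertex s t k, icoVertex s' t' k⟫ ≤ (√5)⁻¹ := by
  rw [inner_icoVertex_same_slot, ← gr_mul_icoScale_sq]
  refine mul_le_mul_of_nonneg_right ?_ (sq_nonneg _)
  have := gr_sq
  have := gr_pos
  rcases hs with rfl | rfl <;> rcases ht with rfl | rfl <;> rcases hs' with rfl | rfl <;>
    rcases ht' with rfl | rfl <;> first | exact (hne ⟨rfl, rfl⟩).elim | nlinarith

lemma inner_icoVertex_of_slot_ne {s t s' t' : ℝ} (hs : s = 1 ∨ s = -1) (ht : t = 1 ∨ t = -1)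
    (hs' : s' = 1 ∨ s' = -1) (ht' : t' = 1 ∨ t' = -1) {k k' : Fin 3} (hk : k ≠ k') :
    ⟪icoVertex s t k, icoVertex s' t' k'⟫ ≤ (√5)⁻¹ := by
  rw [← gr_mul_icoScale_sq]
  have ha : 0 ≤ gr * icoScale ^ 2 := by have := gr_pos; positivity
  have h1 := mul_le_mul_of_nonneg_right (sign_mul_le_one hs ht') ha
  have h2 := mul_le_mul_of_nonneg_right (sign_mul_le_one ht hs') ha
  fin_cases k <;> fin_cases k' <;> simp only [icoVertex, inner_toLp_three_toLp_three] <;>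
    first | exact absurd rfl hk | linarith

lemma inner_le_of_mem_icosahedron {x y : EuclideanSpace ℝ (Fin 3)} (hx : x ∈ icosahedron)
    (hy : y ∈ icosahedron) (hxy : x ≠ y) : ⟪x, y⟫ ≤ (√5)⁻¹ := by
  obtain ⟨s, t, hs, ht, k, rfl⟩ := mem_icosahedron_iff.1 hx
  obtain ⟨s', t', hs', ht', k', rfl⟩ := mem_icosahedron_iff.1 hy
  by_cases hk : k = k'
  · subst hk
    refine inner_icoVertex_same_slot_le hs ht hs' ht' ?_ k
    rintro ⟨rfl, rfl⟩
    exact hxy rfl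
  · exact inner_icoVertex_of_slot_ne hs ht hs' ht' hk

lemma inner_icoVertex_zero_two : ⟪icoVertex 1 1 0, icoVertex 1 1 2⟫ = (√5)⁻¹ := by
  rw [← gr_mul_icoScale_sq]
  simp only [icoVertex, inner_toLp_three_toLp_three]
  ring

lemma icoVertex_zero_ne_two : icoVertex 1 1 0 ≠ icoVertex 1 1 2 := by
  intro h
  have h0 : (0 : ℝ) = 1 * icoScale := congrArg (· 0) h
  linarith [icoScale_pos]

/-- One vertex from each antipodal pair; together they form a tight frame. -/
lemma sum_sq_inner_icoVertex (y : EuclideanSpace ℝ (Fin 3)) :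
    ∑ k, ∑ t ∈ ({1, -1} : Finset ℝ), ⟪icoVertex 1 t k, y⟫ ^ 2 = 2 * ‖y‖ ^ 2 := by
  have hscale : (1 + gr ^ 2) * icoScale ^ 2 = 1 := by
    rw [icoScale_sq]
    exact mul_inv_cancel₀ (by positivity)
  simp only [EuclideanSpace.real_norm_sq_eq, Finset.sum_pair (show (1 : ℝ) ≠ -1 by norm_num),
    Fin.sum_univ_three, icoVertex, inner_toLp_three]
  linear_combination (2 * (y 0 ^ 2 + y 1 ^ 2 + y 2 ^ 2)) * hscale

lemma exists_mem_icosahedron_lt_inner {y : EuclideanSpace ℝ (Fin 3)} (hy : ‖y‖ = 1) :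
    ∃ x ∈ icosahedron, (√5)⁻¹ < ⟪x, y⟫ := by
  have hsum : ∑ _k : Fin 3, ∑ _t ∈ ({1, -1} : Finset ℝ), (√5)⁻¹ ^ 2 <
      ∑ k, ∑ t ∈ ({1, -1} : Finset ℝ), ⟪icoVertex 1 t k, y⟫ ^ 2 := by
    rw [sum_sq_inner_icoVertex, hy, inv_sqrt_five_sq, Finset.sum_pair (by norm_num)]
    norm_num
  obtain ⟨k, -, hk⟩ := Finset.exists_lt_of_sum_lt hsum
  obtain ⟨t, ht, hlt⟩ := Finset.exists_lt_of_sum_lt hk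
  have ht : t = 1 ∨ t = -1 := by simpa using ht
  rcases lt_inner_or_lt_inner_neg_of_sq_lt (by positivity) hlt with h | h
  · exact ⟨_, icoVertex_mem (Or.inl rfl) ht k, h⟩
  · rw [neg_icoVertex] at h
    exact ⟨_, icoVertex_mem (Or.inr rfl) (by rcases ht with rfl | rfl <;> norm_num) k, h⟩

/-- The regular icosahedron inscribed in the unit sphere has maximum pairwise inner product `α = (Real.sqrt 5)⁻¹`,
and adjoining any new unit vector strictly increases the maximum pairwise inner product:
every unit vector `y ∉ X` has `⟪x, y⟫ > α` for some vertex `x`. -/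
theorem stmt_16 :
    IsGreatest {r : ℝ | ∃ x ∈ icosahedron, ∃ y ∈ icosahedron, x ≠ y ∧ ⟪x, y⟫ = r} ((Real.sqrt 5)⁻¹) ∧
      ∀ y : EuclideanSpace ℝ (Fin 3), ‖y‖ = 1 → y ∉ icosahedron →
        ∃ x ∈ icosahedron, ⟪x, y⟫ > ((Real.sqrt 5)⁻¹) := by
  have hmem := icoVertex_mem (Or.inl rfl) (Or.inl rfl) (s := 1) (t := 1)
  refine ⟨⟨?_, ?_⟩, fun y hy _ ↦ exists_mem_icosahedron_lt_inner hy⟩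
  · exact ⟨_, hmem 0, _, hmem 2, icoVertex_zero_ne_two, inner_icoVertex_zero_two⟩
  · rintro r ⟨x, hx, y, hy, hxy, rfl⟩
    exact inner_le_of_mem_icosahedron hx hy hxy
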